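/- Let N ≥ 1, and for each i = 1, …, N let αᵢ > 0, Eᵢ > 0, and aᵢ, bᵢ be real; let c_g and E_r be real, and let 0 ≤ c_min ≤ c_max and C ≥ N·c_min. Define J(c₁, …, c_N) = Σᵢ [ ((cᵢ + Eᵢ)/(2αᵢ))·cᵢ² + aᵢ·cᵢ + bᵢ ] + c_g·(E_r − Σᵢ (cᵢ + Eᵢ)/(2αᵢ)). Then the constraint set K = { c ∈ ℝᴺ : Σᵢ cᵢ ≤ C and c_min ≤ cᵢ ≤ c_max for all i } is nonempty, compact, and convex, J is strictly convex on K, and J attains a unique minimizer on K. -/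
import Mathlib

open Set

private lemma strictConvexOn_smul' {s : Set ℝ} {f : ℝ → ℝ} {c : ℝ} (hc : 0 < c)
    (hf : StrictConvexOn ℝ s f) : StrictConvexOn ℝ s fun x => c * f x := by
  refine ⟨hf.1, fun x hx y hy hxy t u ht hu htu => ?_⟩
  have := hf.2 hx hy hxy ht hu htu
  simp only [smul_eq_mul] at *
  nlinarith

private lemma affine_convexOn {s : Set ℝ} (hs : Convex ℝ s) (m k : ℝ) :
    ConvexOn ℝ s fun x => m * x + k := by
  refine ⟨hs, fun x _ y _ t u ht hu htu => le_of_eq ?_⟩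
  simp only [smul_eq_mul]
  linear_combination (-k) * htu

private lemma cubic_strictConvex {A B m k : ℝ} (hA : 0 < A) (hB : 0 < B) :
    StrictConvexOn ℝ (Ici (0:ℝ)) (fun x => A * x ^ 3 + B * x ^ 2 + (m * x + k)) := by
  have h3 : ConvexOn ℝ (Ici (0:ℝ)) (fun x : ℝ => A * x ^ 3) := by
    simpa [smul_eq_mul] using (convexOn_pow (𝕜 := ℝ) 3).smul hA.le
  have h2 : StrictConvexOn ℝ (Ici (0:ℝ)) (fun x : ℝ => B * x ^ 2) :=
    strictConvexOn_smul' hB (strictConvexOn_pow (by norm_num))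
  have := ((h2.add_convexOn h3).add_convexOn (affine_convexOn (convex_Ici 0) m k))
  refine StrictConvexOn.congr this fun x _ => by
    simp only [Pi.add_apply]
    ring

/-- Let `N ≥ 1`, and for each `i = 1, …, N` let `αᵢ > 0`, `Eᵢ > 0`, and
`aᵢ, bᵢ` be real; let `c_g` and `E_r` be real, and let `0 ≤ c_min ≤ c_max` and
`C ≥ N·c_min`. Define
`J(c₁, …, c_N) = Σᵢ [((cᵢ + Eᵢ)/(2αᵢ))·cᵢ² + aᵢ·cᵢ + bᵢ] + c_g·(E_r − Σᵢ (cᵢ + Eᵢ)/(2αᵢ))`.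
Then the constraint set `K = {c ∈ ℝᴺ : Σᵢ cᵢ ≤ C ∧ ∀ i, c_min ≤ cᵢ ≤ c_max}` is nonempty,
compact, and convex, `J` is strictly convex on `K`, and `J` attains a unique minimizer
on `K`. -/
theorem stmt_15 (N : ℕ) (hN : 1 ≤ N) (α E a b : Fin N → ℝ)
    (hα : ∀ i, 0 < α i) (hE : ∀ i, 0 < E i)
    (c_g E_r c_min c_max C : ℝ) (h0 : 0 ≤ c_min) (hmm : c_min ≤ c_max)
    (hC : (N : ℝ) * c_min ≤ C) :
    let J : (Fin N → ℝ) → ℝ := fun c =>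
      (∑ i, (((c i + E i) / (2 * α i)) * (c i) ^ 2 + a i * c i + b i)) +
        c_g * (E_r - ∑ i, (c i + E i) / (2 * α i))
    let K : Set (Fin N → ℝ) :=
      {c | (∑ i, c i) ≤ C ∧ ∀ i, c_min ≤ c i ∧ c i ≤ c_max}
    K.Nonempty ∧ IsCompact K ∧ Convex ℝ K ∧ StrictConvexOn ℝ K J ∧
      ∃! x : Fin N → ℝ, x ∈ K ∧ IsMinOn J K x := by
  intro J K
  -- nonempty
  have hne : K.Nonempty := by
    refine ⟨fun _ => c_min, ?_, fun i => ⟨le_refl _, hmm⟩⟩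
    simpa using hC
  -- compact
  have hKclosed : IsClosed K := by
    have h1 : IsClosed {c : Fin N → ℝ | (∑ i, c i) ≤ C} :=
      isClosed_le (by continuity) continuous_const
    have h2 : IsClosed {c : Fin N → ℝ | ∀ i, c_min ≤ c i ∧ c i ≤ c_max} := by
      have : {c : Fin N → ℝ | ∀ i, c_min ≤ c i ∧ c i ≤ c_max} =
          ⋂ i, {c : Fin N → ℝ | c_min ≤ c i ∧ c i ≤ c_max} := by
        ext c; simp
      rw [this]
      exact isClosed_iInter fun i =>
        (isClosed_le continuous_const (continuous_apply i)).inter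
          (isClosed_le (continuous_apply i) continuous_const)
    exact h1.inter h2
  have hKsub : K ⊆ Set.Icc (fun _ => c_min) (fun _ => c_max) := by
    intro c hc
    exact ⟨fun i => (hc.2 i).1, fun i => (hc.2 i).2⟩
  have hKcpt : IsCompact K := (isCompact_Icc).of_isClosed_subset hKclosed hKsub
  -- convex
  have hKconv : Convex ℝ K := by
    intro x hx y hy t u ht hu htu
    refine ⟨?_, fun i => ⟨?_, ?_⟩⟩
    · have hsum : (∑ i, (t • x + u • y) i) = t * ∑ i, x i + u * ∑ i, y i := by
        simp [Finset.mul_sum, Finset.sum_add_distrib]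
      rw [hsum]
      have h1 : t * ∑ i, x i ≤ t * C := mul_le_mul_of_nonneg_left hx.1 ht
      have h2 : u * ∑ i, y i ≤ u * C := mul_le_mul_of_nonneg_left hy.1 hu
      have h3 : t * C + u * C = C := by linear_combination C * htu
      linarith
    · have h1 := (hx.2 i).1; have h2 := (hy.2 i).1
      simp only [Pi.add_apply, Pi.smul_apply, smul_eq_mul]
      nlinarith [mul_nonneg ht (sub_nonneg.2 h1), mul_nonneg hu (sub_nonneg.2 h2)]
    · have h1 := (hx.2 i).2; have h2 := (hy.2 i).2
      simp only [Pi.add_apply, Pi.smul_apply, smul_eq_mul]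
      nlinarith [mul_nonneg ht (sub_nonneg.2 h1), mul_nonneg hu (sub_nonneg.2 h2)]
  -- rewrite J as a sum of per-coordinate functions plus a constant
  set φ : Fin N → ℝ → ℝ := fun i x =>
    (1 / (2 * α i)) * x ^ 3 + (E i / (2 * α i)) * x ^ 2 +
      ((a i - c_g / (2 * α i)) * x + (b i - c_g * E i / (2 * α i))) with hφ
  have hJeq : ∀ c : Fin N → ℝ, J c = (∑ i, φ i (c i)) + c_g * E_r := by
    intro c
    have h1 : ∀ i ∈ Finset.univ, φ i (c i) =
        (((c i + E i) / (2 * α i)) * (c i) ^ 2 + a i * c i + b i)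
          - c_g * ((c i + E i) / (2 * α i)) := by
      intro i _
      have hαi := (hα i).ne'
      simp only [hφ]
      field_simp
      ring
    rw [Finset.sum_congr rfl h1, Finset.sum_sub_distrib, ← Finset.mul_sum]
    simp only [J]
    ring
  have hφsc : ∀ i, StrictConvexOn ℝ (Ici (0:ℝ)) (φ i) := fun i =>
    cubic_strictConvex (by have := hα i; positivity) (by have := hα i; have := hE i; positivity)
  -- strict convexity of J on K
  have hJsc : StrictConvexOn ℝ K J := by
    refine ⟨hKconv, fun x hx y hy hxy t u ht hu htu => ?_⟩
    rw [hJeq, hJeq, hJeq]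
    have hxi : ∀ i, x i ∈ Ici (0:ℝ) := fun i => le_trans h0 (hx.2 i).1
    have hyi : ∀ i, y i ∈ Ici (0:ℝ) := fun i => le_trans h0 (hy.2 i).1
    obtain ⟨j, hj⟩ : ∃ j, x j ≠ y j := by
      by_contra h
      push_neg at h
      exact hxy (funext h)
    have hsum : ∑ i, φ i ((t • x + u • y) i) < ∑ i, (t * φ i (x i) + u * φ i (y i)) := by
      refine Finset.sum_lt_sum (fun i _ => ?_) ⟨j, Finset.mem_univ j, ?_⟩
      · by_cases hix : x i = y i
        · simp only [Pi.add_apply, Pi.smul_apply, smul_eq_mul, hix]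
          have h4 : t * y i + u * y i = y i := by linear_combination (y i) * htu
          rw [h4]
          exact le_of_eq (by linear_combination (-(φ i (y i))) * htu)
        · have := ((hφsc i).2 (hxi i) (hyi i) hix ht hu htu).le
          simpa [smul_eq_mul] using this
      · have := (hφsc j).2 (hxi j) (hyi j) hj ht hu htu
        simpa [smul_eq_mul] using this
    have hrhs : t • ((∑ i, φ i (x i)) + c_g * E_r) + u • ((∑ i, φ i (y i)) + c_g * E_r)
        = (∑ i, (t * φ i (x i) + u * φ i (y i))) + c_g * E_r := by
      have hs : (∑ i, (t * φ i (x i) + u * φ i (y i)))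
          = t * (∑ i, φ i (x i)) + u * (∑ i, φ i (y i)) := by
        rw [Finset.sum_add_distrib, Finset.mul_sum, Finset.mul_sum]
      rw [smul_eq_mul, smul_eq_mul, hs]
      linear_combination (c_g * E_r) * htu
    rw [hrhs]
    linarith
  -- continuity of J
  have hJcont : Continuous J := by
    simp only [J]
    fun_prop
  -- existence and uniqueness of the minimizer
  obtain ⟨x, hxK, hxmin⟩ := hKcpt.exists_isMinOn hne hJcont.continuousOn
  refine ⟨hne, hKcpt, hKconv, hJsc, x, ⟨hxK, hxmin⟩, ?_⟩
  rintro y ⟨hyK, hymin⟩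
  exact hJsc.eq_of_isMinOn hymin hxmin hyK hxK
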